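/- Let Δ ⊆ [n] be a nonempty finite set with maximal block decomposition and the associated partition Δ = A(Δ) ⊔ B(Δ) ⊔ C(Δ) defined recursively as in the context. Then |A(Δ)| = a(Δ), |B(Δ)| = 2·b(Δ), and |C(Δ)| = 3·c(Δ), where a(Δ), b(Δ), c(Δ) are the invariants defined from the extended-block decomposition. -/

import Mathlib

/-- Group a sorted list of naturals into maximal runs of consecutive integers
(the maximal block decomposition). -/
def runs : List ℕ → List (List ℕ)
  | [] => []
  | x :: xs =>
    match runs xs with
    | (y :: ys) :: rest => if x + 1 = y then (x :: y :: ys) :: rest else [x] :: (y :: ys) :: rest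
    | l => [x] :: l

/-- For each maximal block, record (min, max, cardinality mod 3). -/
def blockData (l : List ℕ) : List (ℕ × ℕ × ℕ) :=
  (runs l).map (fun b => (b.headI, (b.getLast?).getD 0, b.length % 3))

/-- Fold over the list of blocks, grouping consecutive gluable type-1/type-2 blocks into
maximal extended blocks; the state `(t, s)` counts type-1/type-2 blocks of the current
extended block and `prev` records the max of the previous block if it can be glued onto.
Each finished extended block with `t` type-1 and `s` type-2 blocks contributes
`t % 2` to `a` and `s + (t - t % 2) / 2` to `b`; the result is `(a, b)`. -/
def go : List (ℕ × ℕ × ℕ) → ℕ → ℕ → Option ℕ → ℕ × ℕ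
  | [], t, s, _ => (t % 2, s + (t - t % 2) / 2)
  | (m, mx, ty) :: rest, t, s, prev =>
    if ty = 0 then
      let r := go rest 0 0 none
      (r.1 + t % 2, r.2 + s + (t - t % 2) / 2)
    else if prev = some (m - 2) ∧ 2 ≤ m then
      go rest (t + if ty = 1 then 1 else 0) (s + if ty = 2 then 1 else 0) (some mx)
    else
      let r := go rest (if ty = 1 then 1 else 0) (if ty = 2 then 1 else 0) (some mx)
      (r.1 + t % 2, r.2 + s + (t - t % 2) / 2)

/-- The invariant `a(Δ)`. -/
def aF (Δ : Finset ℕ) : ℕ := (go (blockData (Δ.sort (· ≤ ·))) 0 0 none).1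

/-- The invariant `b(Δ)`. -/
def bF (Δ : Finset ℕ) : ℕ := (go (blockData (Δ.sort (· ≤ ·))) 0 0 none).2

/-- The invariant `c(Δ) = (|Δ| - a(Δ) - 2 b(Δ)) / 3`. -/
def cF (Δ : Finset ℕ) : ℕ := (Δ.card - aF Δ - 2 * bF Δ) / 3

/-- The invariant `k(Δ) = a(Δ) + b(Δ) + c(Δ)`. -/
def kF (Δ : Finset ℕ) : ℕ := aF Δ + bF Δ + cF Δ

/-- The piecewise function `d(Δ, t)` of the paper. -/
def dF (Δ : Finset ℕ) (t : ℕ) : ℕ :=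
  if t ≤ aF Δ then kF Δ + 2 - t
  else if t ≤ aF Δ + 2 * bF Δ then kF Δ + 1 - (t + aF Δ - 1) / 2
  else if t ≤ Δ.card then kF Δ + 1 - (t + 2 * aF Δ + bF Δ - 1) / 3
  else 1

/-- The recursive construction of the pair `(A(Δ), B(Δ))` from the list of maximal
blocks of `Δ` (each block a list of consecutive integers, in increasing order). -/
def ABgo : List (List ℕ) → Finset ℕ × Finset ℕ
  | [] => (∅, ∅)
  | [b1] =>
    if b1.length % 3 = 1 then ({(b1.getLast?).getD 0}, ∅)
    else if b1.length % 3 = 2 then (∅, {(b1.getLast?).getD 0 - 1, (b1.getLast?).getD 0})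
    else (∅, ∅)
  | b1 :: b2 :: rest =>
    let ty := b1.length % 3
    let n1 := (b1.getLast?).getD 0
    if ty = 0 then ABgo (b2 :: rest)
    else if ty = 2 then
      let r := ABgo (b2 :: rest)
      (r.1, r.2 ∪ {n1 - 1, n1})
    else if b2.headI = n1 + 2 ∧ b2.length % 3 ≠ 0 then
      let r := ABgo (b2.drop 1 :: rest)
      (r.1, r.2 ∪ {n1, b2.headI})
    else
      let r := ABgo (b2 :: rest)
      (r.1 ∪ {n1}, r.2)
termination_by l => (l.map (fun b => b.length + 1)).sum
decreasing_by all_goals simp [List.length_drop] <;> omega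

/-- The set `A(Δ)`. -/
def AF (Δ : Finset ℕ) : Finset ℕ := (ABgo (runs (Δ.sort (· ≤ ·)))).1

/-- The set `B(Δ)`. -/
def BF (Δ : Finset ℕ) : Finset ℕ := (ABgo (runs (Δ.sort (· ≤ ·)))).2

/-- The set `C(Δ) = Δ \ (A(Δ) ∪ B(Δ))`. -/
def CF (Δ : Finset ℕ) : Finset ℕ := Δ \ (AF Δ ∪ BF Δ)

/-!
Both `(aF Δ, bF Δ)` and `(AF Δ, BF Δ)` are produced by a scan of the list of maximal blocks, and
the two scans obey the same recursion: a type-0 block contributes nothing, a type-2 block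
contributes `(0, 1)` (the pair `{n - 1, n}` to `B`), a type-1 block that cannot be glued contributes
`(1, 0)` (its last element to `A`), and a type-1 block glued to the next block contributes `(0, 1)`
(`{n₁, m₂}` to `B`), after which the next block is treated without its first element: a glued
type-1 block becomes a type-0 block, a glued type-2 block a type-1 block that may in turn be glued
to the block after it. Since the blocks are increasing, each new contribution is disjoint from
everything the remaining blocks produce, which gives the cardinalities. Finally an extended block
with `t` type-1 and `s` type-2 blocks contributes `t + 2 s` to `a + 2 b`, which is its size modulo
3, so `3 ∣ |Δ| - a - 2 b = |C(Δ)|`.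
-/

def blockInfo (b : List ℕ) : ℕ × ℕ × ℕ := (b.headI, (b.getLast?).getD 0, b.length % 3)

-- `aF Δ` and `bF Δ` are, by definition, the components of `abCount (runs (Δ.sort (· ≤ ·)))`.
def abCount (L : List (List ℕ)) : ℕ × ℕ := go (L.map blockInfo) 0 0 none

theorem go_eq_add (X : List (ℕ × ℕ × ℕ)) (t s : ℕ) (p : Option ℕ) :
    go X t s p = go X (t % 2) 0 p + (0, s + t / 2) := by
  induction X generalizing t s p with
  | nil => simp [go, Prod.ext_iff]; omega
  | cons d X ih =>
    obtain ⟨m, mx, ty⟩ := d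
    simp only [go]
    generalize (if ty = 1 then 1 else 0) = i
    generalize (if ty = 2 then 1 else 0) = j
    split_ifs
    · simp [Prod.ext_iff]; omega
    · rw [ih (t + i), ih (t % 2 + i), Nat.mod_add_mod]
      simp [Prod.ext_iff]; omega
    · simp [Prod.ext_iff]; omega

theorem go_zero_zero (X : List (ℕ × ℕ × ℕ)) (p : Option ℕ) : go X 0 0 p = go X 0 0 none := by
  rcases X with _ | ⟨⟨m, mx, ty⟩, X⟩
  · rfl
  · simp only [go]
    split_ifs <;> simp_all

theorem abCount_cons_of_type_zero {b : List ℕ} (T : List (List ℕ)) (h : b.length % 3 = 0) :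
    abCount (b :: T) = abCount T := by
  simp [abCount, blockInfo, go, h]

theorem abCount_cons_of_type_two {b : List ℕ} (T : List (List ℕ)) (h : b.length % 3 = 2) :
    abCount (b :: T) = abCount T + (0, 1) :=
  calc abCount (b :: T) = go (T.map blockInfo) 0 1 (some ((b.getLast?).getD 0)) := by
        simp [abCount, blockInfo, go, h]
    _ = abCount T + (0, 1) := by rw [go_eq_add, go_zero_zero]; rfl

theorem abCount_singleton_of_type_one {b : List ℕ} (h : b.length % 3 = 1) :
    abCount [b] = (1, 0) := by
  simp [abCount, blockInfo, go, h]

theorem abCount_cons_cons_of_not_glue {b1 b2 : List ℕ} (rest : List (List ℕ))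
    (h1 : b1.length % 3 = 1) (h : ¬(b2.headI = (b1.getLast?).getD 0 + 2 ∧ b2.length % 3 ≠ 0)) :
    abCount (b1 :: b2 :: rest) = abCount (b2 :: rest) + (1, 0) := by
  by_cases h2 : b2.length % 3 = 0
  · simp [abCount, blockInfo, go, h1, h2, Prod.ext_iff]
  · have : ¬(b1.getLast?.getD 0 = b2.headI - 2 ∧ 2 ≤ b2.headI) := by omega
    simp [abCount, blockInfo, go, h1, h2, this, Prod.ext_iff]

theorem abCount_cons_cons_of_glue {b1 b2 : List ℕ} (rest : List (List ℕ))
    (h1 : b1.length % 3 = 1) (h : b2.headI = (b1.getLast?).getD 0 + 2 ∧ b2.length % 3 ≠ 0) :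
    abCount (b1 :: b2 :: rest) = abCount (b2.drop 1 :: rest) + (0, 1) := by
  have hglue : b1.getLast?.getD 0 = b2.headI - 2 ∧ 2 ≤ b2.headI := by omega
  rcases (by omega : b2.length % 3 = 1 ∨ b2.length % 3 = 2) with h2 | h2
  · calc abCount (b1 :: b2 :: rest)
          = go (rest.map blockInfo) 2 0 (some ((b2.getLast?).getD 0)) := by
          simp [abCount, blockInfo, go, h1, h2, hglue]
      _ = abCount rest + (0, 1) := by rw [go_eq_add, go_zero_zero]; rfl
      _ = abCount (b2.drop 1 :: rest) + (0, 1) := by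
          rw [abCount_cons_of_type_zero rest (by simp; omega)]
  · have hlast : (b2.drop 1).getLast? = b2.getLast? := by
      rw [List.getLast?_drop, if_neg (by omega)]
    calc abCount (b1 :: b2 :: rest)
          = go (rest.map blockInfo) 1 1 (some ((b2.getLast?).getD 0)) := by
          simp [abCount, blockInfo, go, h1, h2, hglue]
      _ = go (rest.map blockInfo) 1 0 (some ((b2.getLast?).getD 0)) + (0, 1) := go_eq_add ..
      _ = abCount (b2.drop 1 :: rest) + (0, 1) := by
          rw [← hlast]
          simp [abCount, blockInfo, go, (by omega : (b2.length - 1) % 3 = 1)]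

theorem go_fst_add_two_mul_snd_mod_three (L : List (List ℕ)) (t s : ℕ) (p : Option ℕ) :
    ((go (L.map blockInfo) t s p).1 + 2 * (go (L.map blockInfo) t s p).2) % 3 =
      (t + 2 * s + L.flatten.length) % 3 := by
  induction L generalizing t s p with
  | nil => simp only [List.map_nil, go, List.flatten_nil, List.length_nil]; omega
  | cons b L ih =>
    simp only [List.map_cons, blockInfo, go, List.flatten_cons, List.length_append]
    have hij : (if b.length % 3 = 1 then 1 else 0) + 2 * (if b.length % 3 = 2 then 1 else 0) =
        b.length % 3 ∨ b.length % 3 = 0 := by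
      split_ifs <;> omega
    generalize (if b.length % 3 = 1 then 1 else 0) = i at *
    generalize (if b.length % 3 = 2 then 1 else 0) = j at *
    split_ifs with h0
    · have := ih 0 0 none; omega
    · have := ih (t + i) (s + j) (some ((b.getLast?).getD 0)); omega
    · have := ih i j (some ((b.getLast?).getD 0)); omega

def IntervalBlocks (L : List (List ℕ)) : Prop := ∀ b ∈ L, ∃ m k, b = List.range' m k

theorem IntervalBlocks.tail {b : List ℕ} {L : List (List ℕ)} (h : IntervalBlocks (b :: L)) :
    IntervalBlocks L :=
  fun c hc => h c (List.mem_cons_of_mem b hc)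

theorem IntervalBlocks.drop_head {b : List ℕ} {L : List (List ℕ)} (h : IntervalBlocks (b :: L)) :
    IntervalBlocks (b.drop 1 :: L) := by
  rintro c (_ | ⟨_, hc⟩)
  · obtain ⟨m, k, rfl⟩ := h b List.mem_cons_self
    exact ⟨m + 1, k - 1, by simp⟩
  · exact h.tail c hc

theorem getLast?_getD_range' (m k : ℕ) (hk : k ≠ 0) :
    ((List.range' m k).getLast?).getD 0 = m + k - 1 := by
  simp [List.getLast?_range', hk]

theorem union_subset_flatten_cons {S Q : Finset ℕ} {b : List ℕ} {T : List (List ℕ)}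
    (hS : S ⊆ T.flatten.toFinset) (hQ : Q ⊆ b.toFinset) : S ∪ Q ⊆ (b :: T).flatten.toFinset := by
  rw [List.flatten_cons, List.toFinset_append, Finset.union_comm b.toFinset]
  exact Finset.union_subset_union hS hQ

theorem ABgo_union_subset_flatten : ∀ {L : List (List ℕ)}, IntervalBlocks L →
    (ABgo L).1 ∪ (ABgo L).2 ⊆ L.flatten.toFinset
  | [], _ => by simp [ABgo]
  | [b], hL => by
    obtain ⟨m, k, rfl⟩ := hL _ List.mem_cons_self
    rw [ABgo.eq_2]
    split_ifs with h1 h2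
    all_goals simp only [List.length_range'] at *
    · simp [getLast?_getD_range' m k (by omega)]; omega
    · simp [getLast?_getD_range' m k (by omega), Finset.insert_subset_iff]; omega
    · simp
  | b1 :: b2 :: rest, hL => by
    have ih := ABgo_union_subset_flatten hL.tail
    have ih' := ABgo_union_subset_flatten hL.tail.drop_head
    obtain ⟨m, k, rfl⟩ := hL _ List.mem_cons_self
    simp only [ABgo.eq_3, List.length_range']
    split_ifs with h0 h2 hg
    · simpa using union_subset_flatten_cons ih (Finset.empty_subset (List.range' m k).toFinset)
    · rw [← Finset.union_assoc, getLast?_getD_range' m k (by omega)]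
      exact union_subset_flatten_cons ih (by intro x; simp; omega)
    · obtain ⟨h, t, rfl⟩ := List.exists_cons_of_length_pos (by omega : 0 < b2.length)
      rw [← Finset.union_assoc, getLast?_getD_range' m k (by omega)]
      convert union_subset_flatten_cons (b := List.range' m k ++ [h]) ih'
        (Q := {m + k - 1, h}) (by intro x; simp; omega) using 2 <;> simp
    · rw [Finset.union_right_comm, getLast?_getD_range' m k (by omega)]
      exact union_subset_flatten_cons ih (by intro x; simp; omega)
termination_by L => (L.map (·.length + 1)).sum
decreasing_by all_goals simp only [List.map_cons, List.sum_cons, List.length_drop]; omega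

theorem disjoint_ABgo_of_subset_head {b : List ℕ} {T : List (List ℕ)} (hT : IntervalBlocks T)
    (hs : (b :: T).flatten.Pairwise (· < ·)) {Q : Finset ℕ} (hQ : Q ⊆ b.toFinset) :
    Disjoint ((ABgo T).1 ∪ (ABgo T).2) Q := by
  refine Finset.disjoint_left.2 fun y hy hyQ => ?_
  have hyT : y ∈ T.flatten := by simpa using ABgo_union_subset_flatten hT hy
  have hyb : y ∈ b := by simpa using hQ hyQ
  exact (List.pairwise_append.1 hs).2.2 y hyb y hyT |>.false

def HasCounts (AB : Finset ℕ × Finset ℕ) (ab : ℕ × ℕ) : Prop :=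
  AB.1.card = ab.1 ∧ AB.2.card = 2 * ab.2 ∧ Disjoint AB.1 AB.2

theorem HasCounts.union_fst {AB : Finset ℕ × Finset ℕ} {ab : ℕ × ℕ} {Q : Finset ℕ}
    (h : HasCounts AB ab) (hQ : Disjoint (AB.1 ∪ AB.2) Q) (hcard : Q.card = 1) :
    HasCounts (AB.1 ∪ Q, AB.2) (ab + (1, 0)) := by
  obtain ⟨hA, hB, hAB⟩ := h
  rw [Finset.disjoint_union_left] at hQ
  exact ⟨by simp [Finset.card_union_of_disjoint hQ.1, hA, hcard], by simpa using hB,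
    Finset.disjoint_union_left.2 ⟨hAB, hQ.2.symm⟩⟩

theorem HasCounts.union_snd {AB : Finset ℕ × Finset ℕ} {ab : ℕ × ℕ} {Q : Finset ℕ}
    (h : HasCounts AB ab) (hQ : Disjoint (AB.1 ∪ AB.2) Q) (hcard : Q.card = 2) :
    HasCounts (AB.1, AB.2 ∪ Q) (ab + (0, 1)) := by
  obtain ⟨hA, hB, hAB⟩ := h
  rw [Finset.disjoint_union_left] at hQ
  exact ⟨by simpa using hA, by simp [Finset.card_union_of_disjoint hQ.2, hB, hcard, mul_add],
    Finset.disjoint_union_right.2 ⟨hAB, hQ.1⟩⟩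

theorem hasCounts_ABgo_singleton_range' (m k : ℕ) :
    HasCounts (ABgo [List.range' m k]) (abCount [List.range' m k]) := by
  rw [ABgo.eq_2]
  split_ifs with h1 h2
  · simp [HasCounts, abCount_singleton_of_type_one h1]
  · rw [abCount_cons_of_type_two _ h2]
    simp only [List.length_range'] at h2
    rw [getLast?_getD_range' m k (by omega)]
    simp [HasCounts, Finset.card_pair (by omega : m + k - 1 - 1 ≠ m + k - 1), abCount, go]
  · rw [abCount_cons_of_type_zero _ (by omega)]
    simp [HasCounts, abCount, go]

theorem hasCounts_ABgo : ∀ {L : List (List ℕ)}, IntervalBlocks L → L.flatten.Pairwise (· < ·) →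
    HasCounts (ABgo L) (abCount L)
  | [], _, _ => by simp [HasCounts, ABgo, abCount, go]
  | [b], hL, _ => by
    obtain ⟨m, k, rfl⟩ := hL _ List.mem_cons_self
    exact hasCounts_ABgo_singleton_range' m k
  | b1 :: b2 :: rest, hL, hs => by
    have hs' := (List.pairwise_append.1 hs).2.1
    obtain ⟨m, k, rfl⟩ := hL _ List.mem_cons_self
    simp only [ABgo.eq_3]
    split_ifs with h0 h2 hg
    · rw [abCount_cons_of_type_zero _ h0]
      exact hasCounts_ABgo hL.tail hs'
    · rw [abCount_cons_of_type_two _ h2]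
      simp only [List.length_range'] at h0 h2
      rw [getLast?_getD_range' m k (by omega)]
      exact (hasCounts_ABgo hL.tail hs').union_snd
        (disjoint_ABgo_of_subset_head hL.tail hs (by intro x; simp; omega))
        (Finset.card_pair (by omega))
    · have ih :=
        hasCounts_ABgo hL.tail.drop_head (hs'.sublist ((List.drop_sublist 1 b2).append_right _))
      rw [abCount_cons_cons_of_glue _ (by omega) hg]
      obtain ⟨h, t, rfl⟩ := List.exists_cons_of_length_pos (by omega : 0 < b2.length)
      simp only [List.length_range'] at h0 h2
      simp only [getLast?_getD_range' m k (by omega), List.headI_cons] at hg ⊢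
      have hQ := disjoint_ABgo_of_subset_head (b := List.range' m k ++ [h]) hL.tail.drop_head
        (by simpa using hs) (Q := {m + k - 1, h}) (by intro x; simp; omega)
      exact ih.union_snd hQ (Finset.card_pair (by omega))
    · rw [abCount_cons_cons_of_not_glue _ (by omega) hg]
      simp only [List.length_range'] at h0 h2
      rw [getLast?_getD_range' m k (by omega)]
      exact (hasCounts_ABgo hL.tail hs').union_fst
        (disjoint_ABgo_of_subset_head hL.tail hs (by intro x; simp; omega))
        (Finset.card_singleton _)
termination_by L => (L.map (·.length + 1)).sum
decreasing_by all_goals simp only [List.map_cons, List.sum_cons, List.length_drop]; omega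

theorem runs_flatten (l : List ℕ) : (runs l).flatten = l := by
  induction l with
  | nil => rfl
  | cons x xs ih =>
    rw [runs.eq_2]
    split
    · next y ys rest h =>
      rw [h] at ih
      split_ifs <;> simp [← ih]
    · simp [ih]

theorem intervalBlocks_runs (l : List ℕ) : IntervalBlocks (runs l) := by
  induction l with
  | nil => simp [runs, IntervalBlocks]
  | cons x xs ih =>
    rw [runs.eq_2]
    split
    · next y ys rest h =>
      rw [h] at ih
      obtain ⟨m, _ | k, hb⟩ := ih _ List.mem_cons_self
      · simp at hb
      obtain ⟨rfl, rfl⟩ := List.cons.inj (hb.trans List.range'_succ)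
      split_ifs with hxy
      · exact List.forall_mem_cons.2 ⟨⟨x, k + 2, by simp [List.range'_succ, hxy]⟩, ih.tail⟩
      · exact List.forall_mem_cons.2 ⟨⟨x, 1, rfl⟩, ih⟩
    · exact List.forall_mem_cons.2 ⟨⟨x, 1, rfl⟩, ih⟩

theorem card_A_B_C_general (Δ : Finset ℕ) :
    (AF Δ).card = aF Δ ∧ (BF Δ).card = 2 * bF Δ ∧ (CF Δ).card = 3 * cF Δ := by
  have hflat : (runs (Δ.sort (· ≤ ·))).flatten = Δ.sort (· ≤ ·) := runs_flatten _
  have hblocks := intervalBlocks_runs (Δ.sort (· ≤ ·))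
  obtain ⟨hA, hB, hAB⟩ : (AF Δ).card = aF Δ ∧ (BF Δ).card = 2 * bF Δ ∧ Disjoint (AF Δ) (BF Δ) :=
    hasCounts_ABgo hblocks (by rw [hflat]; exact Δ.sortedLT_sort.pairwise)
  have hsub : AF Δ ∪ BF Δ ⊆ Δ := by
    have := ABgo_union_subset_flatten hblocks
    rwa [hflat, Finset.sort_toFinset] at this
  have hmod : (aF Δ + 2 * bF Δ) % 3 = Δ.card % 3 := by
    have := go_fst_add_two_mul_snd_mod_three (runs (Δ.sort (· ≤ ·))) 0 0 none
    simp only [hflat, Finset.length_sort, Nat.mul_zero, Nat.zero_add] at this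
    exact this
  have hle := Finset.card_le_card hsub
  rw [Finset.card_union_of_disjoint hAB, hA, hB] at hle
  refine ⟨hA, hB, ?_⟩
  rw [CF, Finset.card_sdiff_of_subset hsub, Finset.card_union_of_disjoint hAB, hA, hB, cF]
  omega

theorem card_A_B_C (Δ : Finset ℕ) (hne : Δ.Nonempty) :
    (AF Δ).card = aF Δ ∧ (BF Δ).card = 2 * bF Δ ∧ (CF Δ).card = 3 * cF Δ :=
  card_A_B_C_general Δ
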